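/- Let A be a unital associative ℂ-algebra and let σ₁,σ₂ ∈ A be such that (σ₁,σ₂) satisfies the B₃ relations. Let z ∈ ℂ with z ≠ 1 and such that 1 − zσ₁ and 1 − zσ₂ are invertible. Set Hᵢ(z) = σᵢ(1 − zσᵢ)⁻¹. Then σ₂H₁(z) − H₂(z)σ₁ = (z/(z−1))·(σ₂²σ₁ − σ₂σ₁² + σ₁² − σ₂²) + σ₂ − σ₁ + H₁(z) − H₂(z). -/

import Mathlib

/-!
Multiplying by `1 - z • σ₂` on the left and by `1 - z • σ₁` on the right clears the inverses.
The left-hand side then becomes `z • (σ₂σ₁² - σ₂²σ₁)` in any algebra. For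
`P = σ₂²σ₁ - σ₂σ₁² + σ₁² - σ₂²` the B₃ relations give
`(1 - z • σ₂) P (1 - z • σ₁) = (1 - z) • (P - z • (σ₂σ₁² - σ₂²σ₁))`, and the factor `1 - z`
cancels against `z / (z - 1)`.
-/

/-- The pair `(x, y)` satisfies the defining relations of the algebra `B₃`. -/
def SatisfiesB3 {A : Type*} [Ring A] (x y : A) : Prop :=
  x * y * x = y * x * y ∧
  x ^ 2 * y - x * y ^ 2 = x ^ 2 - y ^ 2 + y - x ∧
  y ^ 3 * x - y * x ^ 3 = y ^ 2 * x - y * x ^ 2 + y ^ 3 - x ^ 3 - y ^ 2 + x ^ 2 ∧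
  y ^ 4 * x - y * x ^ 4 = y ^ 2 * x - y * x ^ 2 + y ^ 4 - x ^ 4 - y ^ 2 + x ^ 2

/-- `H_s(w) = s * (1 - w • s)⁻¹`, with the inverse taken via `Ring.inverse`. -/
noncomputable def Hfun {A : Type*} [Ring A] [Algebra ℂ A] (s : A) (w : ℂ) : A :=
  s * Ring.inverse (1 - w • s)

namespace SatisfiesB3

variable {A : Type*} [Ring A] {x y : A}

theorem mul_add_mul_eq_sq_sub_sq (h : SatisfiesB3 x y) :
    y * (y ^ 2 * x - y * x ^ 2 + x ^ 2 - y ^ 2) + (y ^ 2 * x - y * x ^ 2 + x ^ 2 - y ^ 2) * x =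
      x ^ 2 - y ^ 2 := by
  linear_combination (norm := noncomm_ring) h.2.2.1

theorem mul_mul_eq_mul_sq_sub_sq_mul (h : SatisfiesB3 x y) :
    y * (y ^ 2 * x - y * x ^ 2 + x ^ 2 - y ^ 2) * x = y * x ^ 2 - y ^ 2 * x := by
  obtain ⟨h1, h2, h3, h4⟩ := h
  -- The quintic terms `y³x² - y²x³` come from `h3 * x + y * h3 - h4`; the braid relation `h1`
  -- and the quadratic relation `h2` absorb the lower-degree remainder.
  linear_combination (norm := noncomm_ring)
    h1 - h1 * x + h1 * (x * y) - h1 * (y * x) - y * h1 + x * h1 * y + x * y * h1 - y * x * h1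
      - h2 * y - h2 * (x * y) - x * h2 + y * h2 * x - x * y * h2 + h3 * x + y * h3 - h4

theorem one_sub_smul_mul_mul_one_sub_smul {R : Type*} [CommRing R] [Algebra R A]
    (h : SatisfiesB3 x y) (z : R) :
    (1 - z • y) * (y ^ 2 * x - y * x ^ 2 + x ^ 2 - y ^ 2) * (1 - z • x) =
      (1 - z) • (y ^ 2 * x - y * x ^ 2 + x ^ 2 - y ^ 2 - z • (y * x ^ 2 - y ^ 2 * x)) := by
  set P := y ^ 2 * x - y * x ^ 2 + x ^ 2 - y ^ 2
  have hP : P = x ^ 2 - y ^ 2 - (y * x ^ 2 - y ^ 2 * x) := by simp only [P]; noncomm_ring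
  calc (1 - z • y) * P * (1 - z • x) = P - z • (y * P + P * x) + (z * z) • (y * P * x) := by
        simp only [sub_mul, mul_sub, one_mul, mul_one, smul_mul_assoc, mul_smul_comm,
          mul_assoc]
        module
    _ = _ := by
        rw [h.mul_add_mul_eq_sq_sub_sq, h.mul_mul_eq_mul_sq_sub_sq_mul, hP]
        module

end SatisfiesB3

section Hfun

variable {A : Type*} [Ring A] [Algebra ℂ A] {s : A} {w : ℂ}

theorem Hfun_mul_one_sub_smul (h : IsUnit (1 - w • s)) : Hfun s w * (1 - w • s) = s := by
  rw [Hfun, mul_assoc, Ring.inverse_mul_cancel _ h, mul_one]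

theorem one_sub_smul_mul_Hfun (h : IsUnit (1 - w • s)) : (1 - w • s) * Hfun s w = s := by
  have hcomm : (1 - w • s) * s = s * (1 - w • s) := by
    simp only [sub_mul, mul_sub, one_mul, mul_one, smul_mul_assoc, mul_smul_comm]
  rw [Hfun, ← mul_assoc, hcomm, mul_assoc, Ring.mul_inverse_cancel _ h, mul_one]

variable {x y : A} {z : ℂ}

theorem one_sub_smul_mul_mul_Hfun_sub_Hfun_mul (hx : IsUnit (1 - z • x))
    (hy : IsUnit (1 - z • y)) :
    (1 - z • y) * (y * Hfun x z - Hfun y z * x) * (1 - z • x) = z • (y * x ^ 2 - y ^ 2 * x) := by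
  calc (1 - z • y) * (y * Hfun x z - Hfun y z * x) * (1 - z • x)
      = (1 - z • y) * y * (Hfun x z * (1 - z • x)) - ((1 - z • y) * Hfun y z) * x * (1 - z • x) := by
        rw [mul_sub (1 - z • y), sub_mul _ _ (1 - z • x)]
        simp only [mul_assoc]
    _ = _ := by
        rw [Hfun_mul_one_sub_smul hx, one_sub_smul_mul_Hfun hy]
        simp only [sub_mul, mul_sub, one_mul, mul_one, smul_mul_assoc, mul_smul_comm, mul_assoc,
          pow_two]
        module

theorem one_sub_smul_mul_mul_sub_add_Hfun_sub_Hfun (hx : IsUnit (1 - z • x))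
    (hy : IsUnit (1 - z • y)) :
    (1 - z • y) * (y - x + Hfun x z - Hfun y z) * (1 - z • x) =
      z • (x ^ 2 - y ^ 2 - z • (y * x ^ 2 - y ^ 2 * x)) := by
  calc (1 - z • y) * (y - x + Hfun x z - Hfun y z) * (1 - z • x)
      = (1 - z • y) * (y - x) * (1 - z • x) + (1 - z • y) * (Hfun x z * (1 - z • x))
          - ((1 - z • y) * Hfun y z) * (1 - z • x) := by
        rw [mul_sub (1 - z • y), mul_add (1 - z • y), sub_mul _ _ (1 - z • x),
          add_mul _ _ (1 - z • x), mul_assoc _ (Hfun x z)]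
    _ = _ := by
        rw [Hfun_mul_one_sub_smul hx, one_sub_smul_mul_Hfun hy]
        simp only [sub_mul, mul_sub, one_mul, mul_one, smul_mul_assoc, mul_smul_comm, mul_assoc,
          smul_sub, pow_two]
        module

end Hfun

/-- Relation (2.24) of the paper for `B₃`:
`σ₂H₁(z) - H₂(z)σ₁ = (z/(z-1))(σ₂²σ₁ - σ₂σ₁² + σ₁² - σ₂²) + σ₂ - σ₁ + H₁(z) - H₂(z)`. -/
theorem B3_H_lemma {A : Type*} [Ring A] [Algebra ℂ A] (σ₁ σ₂ : A)
    (hrel : SatisfiesB3 σ₁ σ₂)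
    (z : ℂ) (hz : z ≠ 1)
    (h1 : IsUnit (1 - z • σ₁)) (h2 : IsUnit (1 - z • σ₂)) :
    σ₂ * Hfun σ₁ z - Hfun σ₂ z * σ₁ =
      (z / (z - 1)) • (σ₂ ^ 2 * σ₁ - σ₂ * σ₁ ^ 2 + σ₁ ^ 2 - σ₂ ^ 2) +
        σ₂ - σ₁ + Hfun σ₁ z - Hfun σ₂ z := by
  have hc : z / (z - 1) * (1 - z) = -z := by
    field_simp [sub_ne_zero.mpr hz]
    ring
  refine h2.mul_left_cancel (h1.mul_right_cancel ?_)
  calc (1 - z • σ₂) * (σ₂ * Hfun σ₁ z - Hfun σ₂ z * σ₁) * (1 - z • σ₁)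
      = z • (σ₂ * σ₁ ^ 2 - σ₂ ^ 2 * σ₁) := one_sub_smul_mul_mul_Hfun_sub_Hfun_mul h1 h2
    _ = (z / (z - 1)) •
          ((1 - z • σ₂) * (σ₂ ^ 2 * σ₁ - σ₂ * σ₁ ^ 2 + σ₁ ^ 2 - σ₂ ^ 2) * (1 - z • σ₁)) +
          (1 - z • σ₂) * (σ₂ - σ₁ + Hfun σ₁ z - Hfun σ₂ z) * (1 - z • σ₁) := by
        rw [hrel.one_sub_smul_mul_mul_one_sub_smul, smul_smul, hc,
          one_sub_smul_mul_mul_sub_add_Hfun_sub_Hfun h1 h2]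
        module
    _ = (1 - z • σ₂) * ((z / (z - 1)) • (σ₂ ^ 2 * σ₁ - σ₂ * σ₁ ^ 2 + σ₁ ^ 2 - σ₂ ^ 2) +
          (σ₂ - σ₁ + Hfun σ₁ z - Hfun σ₂ z)) * (1 - z • σ₁) := by
        rw [mul_add, add_mul, mul_smul_comm, smul_mul_assoc]
    _ = _ := by
        congr 2
        abel
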